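/- arXiv:1910.03779 — 5 statements merged into one kernel-verified Lean document; each statement's English description precedes it below -/
import Mathlib

section
/- Let z be a noisy binary signal of the ground truth y ∈ {0,1} with error rates e₀ = P(z=1 | y=0) and e₁ = P(z=0 | y=1), where e₀ + e₁ ≠ 1. Define the surrogate score R(p, z) = ((1 − e_{1−z})·S(p, z) − e_z·S(p, 1−z)) / (1 − e₀ − e₁) for any scoring rule S: [0,1] × {0,1} → ℝ. Then for every p ∈ [0,1] and every y ∈ {0,1}, E_{z | y}[R(p, z)] = S(p, y). -/
theorem surrogate_unbiased (S : ℝ → Bool → ℝ) (e0 e1 : ℝ)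
    (he0 : 0 ≤ e0) (he0' : e0 ≤ 1) (he1 : 0 ≤ e1) (he1' : e1 ≤ 1) (he : e0 + e1 ≠ 1)
    (R : ℝ → Bool → ℝ)
    (hRf : ∀ p, R p false = ((1 - e1) * S p false - e0 * S p true) / (1 - e0 - e1))
    (hRt : ∀ p, R p true = ((1 - e0) * S p true - e1 * S p false) / (1 - e0 - e1)) :
    ∀ p ∈ Set.Icc (0:ℝ) 1,
      ((1 - e0) * R p false + e0 * R p true = S p false) ∧
      (e1 * R p false + (1 - e1) * R p true = S p true) := by
  intro p _
  have hne : 1 - e0 - e1 ≠ 0 := by intro h; apply he; linarith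
  rw [hRf, hRt]
  constructor <;> field_simp <;> ring
end

section
/- With the surrogate scoring rule built from a strictly proper scoring rule S and a noisy signal z with error rates e₀, e₁ (e₀ + e₁ < 1), the surrogate score R is itself strictly proper: for any true parameter q ∈ [0,1], the map p ↦ E_{y~Bern(q)} E_{z|y}[R(p,z)] is optimized uniquely at p = q. -/
theorem surrogate_strictly_proper (S : ℝ → Bool → ℝ)
    (hS : ∀ q ∈ Set.Icc (0:ℝ) 1, ∀ p ∈ Set.Icc (0:ℝ) 1, p ≠ q →
      q * S p true + (1 - q) * S p false < q * S q true + (1 - q) * S q false)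
    (e0 e1 : ℝ) (he0 : 0 ≤ e0) (he1 : 0 ≤ e1) (he : e0 + e1 < 1)
    (R : ℝ → Bool → ℝ)
    (hRf : ∀ p, R p false = ((1 - e1) * S p false - e0 * S p true) / (1 - e0 - e1))
    (hRt : ∀ p, R p true = ((1 - e0) * S p true - e1 * S p false) / (1 - e0 - e1)) :
    ∀ q ∈ Set.Icc (0:ℝ) 1, ∀ p ∈ Set.Icc (0:ℝ) 1, p ≠ q →
      q * (e1 * R p false + (1 - e1) * R p true)
        + (1 - q) * ((1 - e0) * R p false + e0 * R p true)
      < q * (e1 * R q false + (1 - e1) * R q true)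
        + (1 - q) * ((1 - e0) * R q false + e0 * R q true) := by
  intro q hq p hp hpq
  have hd : (1 - e0 - e1) ≠ 0 := by linarith
  have key : ∀ r : ℝ, r * (e1 * R r false + (1 - e1) * R r true)
      + (1 - q) * ((1 - e0) * R r false + e0 * R r true)
      = r * (e1 * (((1 - e1) * S r false - e0 * S r true) / (1 - e0 - e1))
          + (1 - e1) * (((1 - e0) * S r true - e1 * S r false) / (1 - e0 - e1)))
      + (1 - q) * ((1 - e0) * (((1 - e1) * S r false - e0 * S r true) / (1 - e0 - e1))
          + e0 * (((1 - e0) * S r true - e1 * S r false) / (1 - e0 - e1))) := by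
    intro r; rw [hRf, hRt]
  have eq2 : ∀ r : ℝ, r * (e1 * R r false + (1 - e1) * R r true)
      + (1 - q) * ((1 - e0) * R r false + e0 * R r true)
      = r * S r true + (1 - q) * S r false := by
    intro r
    rw [key r]
    field_simp
    ring
  have hqq : q * (e1 * R q false + (1 - e1) * R q true)
      + (1 - q) * ((1 - e0) * R q false + e0 * R q true)
      = q * S q true + (1 - q) * S q false := eq2 q
  have hpp : p * (e1 * R p false + (1 - e1) * R p true)
      + (1 - q) * ((1 - e0) * R p false + e0 * R p true)
      = p * S p true + (1 - q) * S p false := eq2 p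
  have h3 := hS q hq p hp hpq
  -- relate q*... to p*... : need expression with q coefficient, not p
  have eq3 : q * (e1 * R p false + (1 - e1) * R p true)
      + (1 - q) * ((1 - e0) * R p false + e0 * R p true)
      = q * S p true + (1 - q) * S p false := by
    rw [hRf, hRt]
    field_simp
    ring
  rw [eq3, hqq]
  exact h3
end

section
/- Determinant mutual information is information-monotone: if X' is conditionally independent of W given X (all binary), then |det(d(X',W))| ≤ |det(d(X,W))|; moreover, the inequality is strict whenever det(d(X,W)) ≠ 0 and the conditional probability matrix d(X'|X) is not a permutation matrix. -/
noncomputable def det2 (f : Bool → Bool → ℝ) : ℝ :=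
  f false false * f true true - f false true * f true false

/-! Conditional independence makes the kernel `A u v = P(X' = u | X = v)` factor the joint law:
`d(X', W) = A · d(X, W)`, so `det d(X', W) = det A · det d(X, W)`. For a column-stochastic
2×2 matrix, `det A = A₀₀ + A₁₁ - 1` lies in `[-1, 1]`, with `|det A| = 1` only when both
diagonal entries are `1` (identity) or both are `0` (swap). -/

open Finset

theorem det2_mul (A B : Bool → Bool → ℝ) :
    det2 (fun u w => ∑ v : Bool, A u v * B v w) = det2 A * det2 B := by
  simp only [det2, Fintype.sum_bool]
  ring

section Stochastic

variable {A : Bool → Bool → ℝ}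

theorem det2_eq_of_sum_col_eq_one (hcol : ∀ v, ∑ u : Bool, A u v = 1) :
    det2 A = A false false + A true true - 1 := by
  have h₀ := hcol false
  have h₁ := hcol true
  simp only [Fintype.sum_bool] at h₀ h₁
  rw [det2, show A true false = 1 - A false false by linarith,
    show A false true = 1 - A true true by linarith]
  ring

theorem diag_le_one_of_stochastic (h0 : ∀ u v, 0 ≤ A u v)
    (hcol : ∀ v, ∑ u : Bool, A u v = 1) (v : Bool) : A v v ≤ 1 := by
  have h := hcol v
  cases v <;> simp only [Fintype.sum_bool] at h <;> linarith [h0 true false, h0 false true]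

theorem abs_det2_le_one_of_stochastic (h0 : ∀ u v, 0 ≤ A u v)
    (hcol : ∀ v, ∑ u : Bool, A u v = 1) : |det2 A| ≤ 1 := by
  rw [det2_eq_of_sum_col_eq_one hcol, abs_le]
  constructor <;>
    linarith [h0 false false, h0 true true, diag_le_one_of_stochastic h0 hcol false,
      diag_le_one_of_stochastic h0 hcol true]

theorem abs_det2_lt_one_of_stochastic (h0 : ∀ u v, 0 ≤ A u v)
    (hcol : ∀ v, ∑ u : Bool, A u v = 1)
    (hperm : ¬((∀ u v, A u v = if u = v then 1 else 0) ∨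
      (∀ u v, A u v = if u = v then 0 else 1))) :
    |det2 A| < 1 := by
  refine (abs_det2_le_one_of_stochastic h0 hcol).lt_of_ne fun hdet => hperm ?_
  have h₀ := hcol false
  have h₁ := hcol true
  simp only [Fintype.sum_bool] at h₀ h₁
  have hff := diag_le_one_of_stochastic h0 hcol false
  have htt := diag_le_one_of_stochastic h0 hcol true
  rw [det2_eq_of_sum_col_eq_one hcol] at hdet
  refine ((abs_eq zero_le_one).mp hdet).imp (fun hdet u v => ?_) (fun hdet u v => ?_) <;>
    cases u <;> cases v <;> simp only [Bool.false_eq_true, Bool.true_eq_false, ↓reduceIte] <;>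
    linarith [h0 false false, h0 true true]

end Stochastic

section CondKernel

variable {α β γ : Type*} [Fintype α] [Fintype γ] (p : α → β → γ → ℝ)

/-- The kernel `P(X' = u | X = v)` of a joint law `p u v w = P(X' = u, X = v, W = w)`. -/
noncomputable def condKernel (u : α) (v : β) : ℝ :=
  (∑ w, p u v w) / ∑ u', ∑ w', p u' v w'

variable {p}

theorem condKernel_nonneg (hnn : ∀ u v w, 0 ≤ p u v w) (u : α) (v : β) :
    0 ≤ condKernel p u v :=
  div_nonneg (sum_nonneg fun w _ => hnn u v w)
    (sum_nonneg fun u' _ => sum_nonneg fun w' _ => hnn u' v w')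

theorem sum_condKernel (hX : ∀ v, 0 < ∑ u, ∑ w, p u v w) (v : β) :
    ∑ u, condKernel p u v = 1 := by
  simp only [condKernel]
  rw [← sum_div, div_self (hX v).ne']

theorem eq_condKernel_mul (hX : ∀ v, 0 < ∑ u, ∑ w, p u v w)
    (hci : ∀ u v w,
      p u v w * (∑ u', ∑ w', p u' v w') = (∑ w', p u v w') * (∑ u', p u' v w))
    (u : α) (v : β) (w : γ) :
    p u v w = condKernel p u v * ∑ u', p u' v w := by
  rw [condKernel, div_mul_eq_mul_div, eq_div_iff (hX v).ne']
  exact hci u v w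

end CondKernel

theorem dmi_information_monotone_general
    (p : Bool → Bool → Bool → ℝ)  -- p u v w = P(X' = u, X = v, W = w)
    (hnn : ∀ u v w, 0 ≤ p u v w)
    (hX : ∀ v, 0 < ∑ u : Bool, ∑ w : Bool, p u v w)
    (hci : ∀ u v w, p u v w * (∑ u' : Bool, ∑ w' : Bool, p u' v w')
      = (∑ w' : Bool, p u v w') * (∑ u' : Bool, p u' v w)) :
    |det2 (fun u w => ∑ v : Bool, p u v w)| ≤ |det2 (fun v w => ∑ u : Bool, p u v w)| ∧
    ((det2 (fun v w => ∑ u : Bool, p u v w) ≠ 0 ∧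
      ¬((∀ u v : Bool, (∑ w : Bool, p u v w) / (∑ u' : Bool, ∑ w' : Bool, p u' v w')
            = if u = v then 1 else 0) ∨
        (∀ u v : Bool, (∑ w : Bool, p u v w) / (∑ u' : Bool, ∑ w' : Bool, p u' v w')
            = if u = v then 0 else 1))) →
      |det2 (fun u w => ∑ v : Bool, p u v w)| < |det2 (fun v w => ∑ u : Bool, p u v w)|) := by
  have h0 := condKernel_nonneg hnn
  have hcol := sum_condKernel hX
  have hfac : (fun u w => ∑ v : Bool, p u v w)
      = fun u w => ∑ v : Bool, condKernel p u v * ∑ u' : Bool, p u' v w := by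
    funext u w
    exact sum_congr rfl fun v _ => eq_condKernel_mul hX hci u v w
  rw [hfac, det2_mul, abs_mul]
  refine ⟨mul_le_of_le_one_left (abs_nonneg _) (abs_det2_le_one_of_stochastic h0 hcol), ?_⟩
  rintro ⟨hne, hperm⟩
  exact mul_lt_of_lt_one_left (abs_pos.mpr hne) (abs_det2_lt_one_of_stochastic h0 hcol hperm)

theorem dmi_information_monotone
    (p : Bool → Bool → Bool → ℝ)  -- p u v w = P(X' = u, X = v, W = w)
    (hnn : ∀ u v w, 0 ≤ p u v w)
    (hsum : ∑ u : Bool, ∑ v : Bool, ∑ w : Bool, p u v w = 1)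
    (hX : ∀ v, 0 < ∑ u : Bool, ∑ w : Bool, p u v w)
    (hci : ∀ u v w, p u v w * (∑ u' : Bool, ∑ w' : Bool, p u' v w')
      = (∑ w' : Bool, p u v w') * (∑ u' : Bool, p u' v w)) :
    |det2 (fun u w => ∑ v : Bool, p u v w)| ≤ |det2 (fun v w => ∑ u : Bool, p u v w)| ∧
    ((det2 (fun v w => ∑ u : Bool, p u v w) ≠ 0 ∧
      ¬((∀ u v : Bool, (∑ w : Bool, p u v w) / (∑ u' : Bool, ∑ w' : Bool, p u' v w')
            = if u = v then 1 else 0) ∨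
        (∀ u v : Bool, (∑ w : Bool, p u v w) / (∑ u' : Bool, ∑ w' : Bool, p u' v w')
            = if u = v then 0 else 1))) →
      |det2 (fun u w => ∑ v : Bool, p u v w)| < |det2 (fun v w => ∑ u : Bool, p u v w)|) :=
  dmi_information_monotone_general p hnn hX hci
end

section
/- Let X_j, X_{j'}, X_k, Y be binary random variables with X_j, X_{j'}, X_k mutually conditionally independent given Y. Then |det(d(X_j, X_k))| − |det(d(X_{j'}, X_k))| = |det(d(X_k | Y))| · (|det(d(X_j, Y))| − |det(d(X_{j'}, Y))|). In particular, if det(d(X_k|Y)) ≠ 0, agent j receives a higher determinant-mutual-information score against reference peer k than agent j' if and only if X_j has higher determinant mutual information with the ground truth Y than X_{j'} does. -/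
theorem dmi_reference_peer
    (qY : Bool → ℝ) (hq : ∀ v, 0 < qY v) (hqsum : qY false + qY true = 1)
    (A B C : Bool → Bool → ℝ)  -- conditional matrices of X_j, X_j', X_k given Y
    (hA : ∀ u v, 0 ≤ A u v) (hAcol : ∀ v, A false v + A true v = 1)
    (hB : ∀ u v, 0 ≤ B u v) (hBcol : ∀ v, B false v + B true v = 1)
    (hC : ∀ u v, 0 ≤ C u v) (hCcol : ∀ v, C false v + C true v = 1) :
    (|det2 (fun u w => ∑ v : Bool, A u v * C w v * qY v)|
        - |det2 (fun u w => ∑ v : Bool, B u v * C w v * qY v)|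
      = |det2 C| * (|det2 (fun u v => A u v * qY v)| - |det2 (fun u v => B u v * qY v)|)) ∧
    (det2 C ≠ 0 →
      (|det2 (fun u w => ∑ v : Bool, B u v * C w v * qY v)|
          < |det2 (fun u w => ∑ v : Bool, A u v * C w v * qY v)|
        ↔ |det2 (fun u v => B u v * qY v)| < |det2 (fun u v => A u v * qY v)|)) := by
  have hAeq : det2 (fun u w => ∑ v : Bool, A u v * C w v * qY v)
      = det2 C * det2 (fun u v => A u v * qY v) := by
    simp [det2, Fintype.sum_bool]; ring
  have hBeq : det2 (fun u w => ∑ v : Bool, B u v * C w v * qY v)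
      = det2 C * det2 (fun u v => B u v * qY v) := by
    simp [det2, Fintype.sum_bool]; ring
  rw [hAeq, hBeq, abs_mul, abs_mul]
  constructor
  · ring
  · intro hC0
    have h : 0 < |det2 C| := abs_pos.mpr hC0
    exact mul_lt_mul_iff_right₀ h
end

section
/- Let c₁ = p₁(1−e₁) + (1−p₁)e₀, c₂ = p₁(1−e₁)² + (1−p₁)e₀², c₃ = p₁(1−e₁)³ + (1−p₁)e₀³ be the probabilities that one, two, and three independent draws of a noisy signal z (with P(y=1)=p₁, error rates e₀ = P(z=1|y=0), e₁ = P(z=0|y=1)) all equal 1. If c₂ ≠ c₁² (i.e., e₀ ≠ 1−e₁ and p₁ ∈ (0,1)), and setting a = (c₃ − c₁c₂)/(c₂ − c₁²) and b = (c₁c₃ − c₂²)/(c₂ − c₁²), then a = (1−e₁) + e₀ and b = (1−e₁)·e₀; consequently e₀ = a/2 − √(a²−4b)/2 and 1−e₁ = a/2 + √(a²−4b)/2 whenever e₀ < 1−e₁. -/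
theorem error_rate_identification (p1 e0 e1 : ℝ)
    (hp1 : p1 ∈ Set.Icc (0:ℝ) 1) (he0 : e0 ∈ Set.Icc (0:ℝ) 1) (he1 : e1 ∈ Set.Icc (0:ℝ) 1)
    (c1 c2 c3 a b : ℝ)
    (hc1 : c1 = p1 * (1 - e1) + (1 - p1) * e0)
    (hc2 : c2 = p1 * (1 - e1)^2 + (1 - p1) * e0^2)
    (hc3 : c3 = p1 * (1 - e1)^3 + (1 - p1) * e0^3)
    (hne : c2 ≠ c1^2)
    (ha : a = (c3 - c1 * c2) / (c2 - c1^2))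
    (hb : b = (c1 * c3 - c2^2) / (c2 - c1^2)) :
    (a = (1 - e1) + e0) ∧ (b = (1 - e1) * e0) ∧
    (e0 < 1 - e1 →
      e0 = a / 2 - Real.sqrt (a^2 - 4 * b) / 2 ∧
      1 - e1 = a / 2 + Real.sqrt (a^2 - 4 * b) / 2) := by
  have hd : c2 - c1^2 ≠ 0 := sub_ne_zero.2 hne
  have haa : a = (1 - e1) + e0 := by
    rw [ha, div_eq_iff hd]; subst hc1 hc2 hc3; ring
  have hbb : b = (1 - e1) * e0 := by
    rw [hb, div_eq_iff hd]; subst hc1 hc2 hc3; ring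
  refine ⟨haa, hbb, fun hlt => ?_⟩
  have hsq : a^2 - 4 * b = ((1 - e1) - e0)^2 := by rw [haa, hbb]; ring
  have hs : Real.sqrt (a^2 - 4 * b) = (1 - e1) - e0 := by
    rw [hsq, Real.sqrt_sq (by linarith)]
  rw [hs, haa]; constructor <;> ring
end
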